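/- arXiv:1504.08082 — 4 statements merged into one kernel-verified Lean document; each statement's English description precedes it below -/
import Mathlib

section
/- Let u : ℝⁿ → ℝ be Lipschitz with constant L. Then the function W̄(x) := sup_{‖v‖=ε} [ α u(x+v) + β ∫ u(x+z) dμ_v(z) ] is Lipschitz on ℝⁿ with Lipschitz constant at most 3L. -/
/-!
For a fixed direction `v`, `x ↦ Wfun n ε α β u x v` is a convex combination of the translate
`x ↦ u (x + v)` and of an average of translates `x ↦ ∫ u (x + z) dμ_v(z)`, so it is `L`-Lipschitz:
averaging against a measure of total mass at most `1` does not increase Lipschitz constants, and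
`diskMeasure` has mass at most `1` whatever the Hausdorff measure of the disk is
(`∞⁻¹ * ∞ = 0`, `0⁻¹ * 0 = 0`). A pointwise supremum of `L`-Lipschitz functions that is finite
everywhere is again `L`-Lipschitz, so `W̄` is even `L`-Lipschitz.
-/

open MeasureTheory Metric Filter Set
open scoped RealInnerProductSpace ENNReal NNReal Topology Classical

noncomputable section

abbrev E (n : ℕ) : Type := EuclideanSpace ℝ (Fin n)

/-- The closed `(n-1)`-dimensional disk of radius `ε` orthogonal to `v`. -/
def diskSet (n : ℕ) (ε : ℝ) (v : E n) : Set (E n) :=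
  {z | ⟪z, v⟫ = 0 ∧ ‖z‖ ≤ ε}

/-- The uniform probability measure on `diskSet n ε v`: the `(n-1)`-dimensional
Hausdorff measure restricted to the disk, normalized to total mass 1. -/
def diskMeasure (n : ℕ) (ε : ℝ) (v : E n) : Measure (E n) :=
  (μH[(n : ℝ) - 1] (diskSet n ε v))⁻¹ • μH[(n : ℝ) - 1].restrict (diskSet n ε v)

/-- `Wfun n ε α β u x v = α u(x+v) + β ∫ u(x+z) dμ_v(z)`. -/
def Wfun (n : ℕ) (ε α β : ℝ) (u : E n → ℝ) (x v : E n) : ℝ :=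
  α * u (x + v) + β * ∫ z, u (x + z) ∂(diskMeasure n ε v)

section Lipschitz

variable {X : Type*} [PseudoMetricSpace X]

theorem LipschitzWith.ciSup {ι : Type*} {f : ι → X → ℝ} {K : ℝ≥0}
    (hf : ∀ i, LipschitzWith K (f i)) (hbdd : ∀ x, BddAbove (range fun i => f i x)) :
    LipschitzWith K fun x => ⨆ i, f i x := by
  cases isEmpty_or_nonempty ι
  · simpa only [Real.iSup_of_isEmpty] using LipschitzWith.const' (α := X) (0 : ℝ)
  refine LipschitzWith.of_le_add_mul K fun x y => ciSup_le fun i => ?_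
  calc f i x ≤ f i y + K * dist x y := (hf i).le_add_mul x y
    _ ≤ (⨆ i, f i y) + K * dist x y := by gcongr; exact le_ciSup (hbdd y) i

theorem LipschitzWith.convex_combination {f g : X → ℝ} {K : ℝ≥0}
    (hf : LipschitzWith K f) (hg : LipschitzWith K g) {a b : ℝ} (ha : 0 ≤ a) (hb : 0 ≤ b)
    (hab : a + b = 1) : LipschitzWith K fun x => a * f x + b * g x := by
  refine LipschitzWith.of_le_add_mul K fun x y => ?_
  have hfxy := hf.le_add_mul x y
  have hgxy := hg.le_add_mul x y
  calc a * f x + b * g x ≤ a * (f y + K * dist x y) + b * (g y + K * dist x y) := by gcongr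
    _ = a * f y + b * g y + K * dist x y := by linear_combination (K * dist x y) * hab

variable {Y F : Type*} [MeasurableSpace Y] [NormedAddCommGroup F] [NormedSpace ℝ F]

theorem norm_integral_le_of_norm_le_of_measure_univ_le_one {μ : Measure Y} (hμ : μ univ ≤ 1)
    {f : Y → F} {C : ℝ} (hC : 0 ≤ C) (hf : ∀ᵐ z ∂μ, ‖f z‖ ≤ C) : ‖∫ z, f z ∂μ‖ ≤ C := by
  have : IsFiniteMeasure μ := ⟨hμ.trans_lt ENNReal.one_lt_top⟩
  have hμ' : μ.real univ ≤ 1 := ENNReal.toReal_le_of_le_ofReal zero_le_one (by simpa using hμ)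
  exact (norm_integral_le_of_norm_le_const hf).trans (mul_le_of_le_one_right hC hμ')

theorem LipschitzWith.integral_of_measure_univ_le_one {μ : Measure Y} (hμ : μ univ ≤ 1)
    {f : X → Y → F} {K : ℝ≥0} (hf : ∀ z, LipschitzWith K fun x => f x z)
    (hint : ∀ x, Integrable (f x) μ) : LipschitzWith K fun x => ∫ z, f x z ∂μ := by
  refine LipschitzWith.of_dist_le_mul fun x y => ?_
  rw [dist_eq_norm, ← integral_sub (hint x) (hint y)]
  refine norm_integral_le_of_norm_le_of_measure_univ_le_one hμ (by positivity) ?_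
  exact Eventually.of_forall fun z => by simpa only [dist_eq_norm] using (hf z).dist_le_mul x y

end Lipschitz

theorem LipschitzWith.norm_apply_add_le {V F : Type*} [SeminormedAddCommGroup V]
    [SeminormedAddCommGroup F] {u : V → F} {L : ℝ≥0} (hu : LipschitzWith L u) (x z : V) :
    ‖u (x + z)‖ ≤ ‖u x‖ + L * ‖z‖ := by
  calc ‖u (x + z)‖ ≤ ‖u x‖ + dist (u (x + z)) (u x) := norm_le_norm_add_norm_sub' _ _ |>.trans_eq
        (by rw [dist_eq_norm])
    _ ≤ ‖u x‖ + L * ‖z‖ := by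
        gcongr
        simpa only [dist_self_add_left] using hu.dist_le_mul (x + z) x

section Disk

variable {n : ℕ} {ε : ℝ}

theorem measurableSet_diskSet (v : E n) : MeasurableSet (diskSet n ε v) :=
  ((isClosed_eq (by fun_prop) continuous_const).inter
    (isClosed_le continuous_norm continuous_const)).measurableSet

theorem diskMeasure_univ_le_one (v : E n) : diskMeasure n ε v univ ≤ 1 := by
  rw [diskMeasure, Measure.smul_apply, smul_eq_mul, Measure.restrict_apply_univ]
  exact ENNReal.inv_mul_le_one _

instance (v : E n) : IsFiniteMeasure (diskMeasure n ε v) :=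
  ⟨(diskMeasure_univ_le_one v).trans_lt ENNReal.one_lt_top⟩

theorem diskMeasure_ae_norm_le (v : E n) : ∀ᵐ z ∂(diskMeasure n ε v), ‖z‖ ≤ ε :=
  Measure.ae_smul_measure ((ae_restrict_mem (measurableSet_diskSet v)).mono fun _ hz => hz.2) _

variable {u : E n → ℝ} {L : ℝ≥0}

theorem diskMeasure_ae_norm_translate_le (hu : LipschitzWith L u) (x v : E n) :
    ∀ᵐ z ∂(diskMeasure n ε v), ‖u (x + z)‖ ≤ |u x| + L * ε := by
  filter_upwards [diskMeasure_ae_norm_le v] with z hz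
  calc ‖u (x + z)‖ ≤ ‖u x‖ + L * ‖z‖ := hu.norm_apply_add_le x z
    _ ≤ |u x| + L * ε := by rw [Real.norm_eq_abs]; gcongr

theorem integrable_translate_diskMeasure (hu : LipschitzWith L u) (x v : E n) :
    Integrable (fun z => u (x + z)) (diskMeasure n ε v) :=
  Integrable.of_bound (hu.continuous.comp (continuous_const_add x)).aestronglyMeasurable _
    (diskMeasure_ae_norm_translate_le hu x v)

variable {α β : ℝ}

theorem lipschitzWith_Wfun (hα : 0 ≤ α) (hβ : 0 ≤ β) (hαβ : α + β = 1)
    (hu : LipschitzWith L u) (v : E n) : LipschitzWith L fun x => Wfun n ε α β u x v :=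
  have translate (w : E n) : LipschitzWith L fun x => u (x + w) := by
    simpa [Function.comp_def] using hu.comp (isometry_add_right w).lipschitz
  (translate v).convex_combination
    (LipschitzWith.integral_of_measure_univ_le_one (diskMeasure_univ_le_one v)
      translate fun x => integrable_translate_diskMeasure hu x v)
    hα hβ hαβ

theorem Wfun_le (hα : 0 ≤ α) (hβ : 0 ≤ β) (hαβ : α + β = 1) (hu : LipschitzWith L u)
    (x : E n) {v : E n} (hv : ‖v‖ ≤ ε) : Wfun n ε α β u x v ≤ |u x| + L * ε := by
  have hC : 0 ≤ |u x| + L * ε := by have := (norm_nonneg v).trans hv; positivity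
  have h_translate : u (x + v) ≤ |u x| + L * ε := by
    refine (le_abs_self _).trans ?_
    calc |u (x + v)| = ‖u (x + v)‖ := (Real.norm_eq_abs _).symm
      _ ≤ |u x| + L * ‖v‖ := hu.norm_apply_add_le x v
      _ ≤ |u x| + L * ε := by gcongr
  have h_average : ∫ z, u (x + z) ∂(diskMeasure n ε v) ≤ |u x| + L * ε :=
    (le_abs_self _).trans <| norm_integral_le_of_norm_le_of_measure_univ_le_one
      (diskMeasure_univ_le_one v) hC (diskMeasure_ae_norm_translate_le hu x v)
  calc Wfun n ε α β u x v ≤ α * (|u x| + L * ε) + β * (|u x| + L * ε) := by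
        unfold Wfun; gcongr
    _ = |u x| + L * ε := by linear_combination (|u x| + L * ε) * hαβ

end Disk

theorem stmt_1_general (n : ℕ) (ε : ℝ)
    (α β : ℝ) (hα : 0 ≤ α) (hβ : 0 ≤ β) (hαβ : α + β = 1)
    (u : E n → ℝ) (L : ℝ≥0) (hu : LipschitzWith L u) :
    LipschitzWith (3 * L)
      (fun x => ⨆ v : sphere (0 : E n) ε, Wfun n ε α β u x (v : E n)) := by
  have hbdd (x : E n) : BddAbove (range fun v : sphere (0 : E n) ε => Wfun n ε α β u x v) :=
    ⟨|u x| + L * ε, forall_mem_range.2 fun v =>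
      Wfun_le hα hβ hαβ hu x (mem_sphere_zero_iff_norm.1 v.2).le⟩
  have hW := LipschitzWith.ciSup
    (fun v : sphere (0 : E n) ε => lipschitzWith_Wfun hα hβ hαβ hu v) hbdd
  exact hW.weaken (le_mul_of_one_le_left' (by norm_num))

theorem stmt_1 (n : ℕ) (hn : 2 ≤ n) (ε : ℝ) (hε : 0 < ε)
    (α β : ℝ) (hα : 0 ≤ α) (hβ : 0 ≤ β) (hαβ : α + β = 1)
    (u : E n → ℝ) (L : ℝ≥0) (hu : LipschitzWith L u) :
    LipschitzWith (3 * L)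
      (fun x => ⨆ v : sphere (0 : E n) ε, Wfun n ε α β u x (v : E n)) :=
  stmt_1_general n ε α β hα hβ hαβ u L hu
end
end

section
/- If u : Ω_ε → ℝ is bounded and Lipschitz continuous on Ω_ε, then Iu is Lipschitz continuous on Ω_ε. -/
open MeasureTheory Metric Filter Set
open scoped RealInnerProductSpace ENNReal NNReal Topology Classical

noncomputable section

/-- The outside boundary strip `O_ε`. -/
def Oeps (n : ℕ) (ε : ℝ) (Ω : Set (E n)) : Set (E n) :=
  {x | x ∉ Ω ∧ infDist x (frontier Ω) ≤ ε}

/-- The thickened domain `Ω_ε = Ω ∪ O_ε`. -/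
def Omegaeps (n : ℕ) (ε : ℝ) (Ω : Set (E n)) : Set (E n) :=
  Ω ∪ Oeps n ε Ω

/-- The boundary cutoff function `δ`. -/
def cutoff (n : ℕ) (ε : ℝ) (Ω : Set (E n)) (x : E n) : ℝ :=
  if x ∈ Ω then
    (if infDist x (frontier Ω) ≤ ε then 1 - ε⁻¹ * infDist x (frontier Ω) else 0)
  else 1

/-- The DPP operator `I`. -/
def Iop (n : ℕ) (ε α β : ℝ) (Ω : Set (E n)) (F : E n → ℝ) (u : E n → ℝ) : E n → ℝ :=
  fun x =>
    if x ∈ Ω then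
      ((1 - cutoff n ε Ω x) / 2) *
          (sSup (Wfun n ε α β u x '' sphere (0 : E n) ε) +
            sInf (Wfun n ε α β u x '' sphere (0 : E n) ε)) +
        cutoff n ε Ω x * F x
    else F x

lemma aux_diskSet_closed (n : ℕ) (ε : ℝ) (v : E n) : IsClosed (diskSet n ε v) := by
  have h1 : IsClosed {z : E n | ⟪z, v⟫ = 0} :=
    isClosed_eq (continuous_id.inner continuous_const) continuous_const
  have h2 : IsClosed {z : E n | ‖z‖ ≤ ε} := isClosed_le continuous_norm continuous_const
  exact h1.inter h2

lemma aux_diskMeasure_univ_le (n : ℕ) (ε : ℝ) (v : E n) :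
    diskMeasure n ε v Set.univ ≤ 1 := by
  rw [diskMeasure, Measure.smul_apply, Measure.restrict_apply_univ, smul_eq_mul]
  exact ENNReal.inv_mul_le_one _

lemma aux_finite (n : ℕ) (ε : ℝ) (v : E n) : IsFiniteMeasure (diskMeasure n ε v) :=
  ⟨lt_of_le_of_lt (aux_diskMeasure_univ_le n ε v) ENNReal.one_lt_top⟩

lemma aux_ae_mem (n : ℕ) (ε : ℝ) (v : E n) :
    ∀ᵐ z ∂(diskMeasure n ε v), z ∈ diskSet n ε v :=
  Measure.ae_smul_measure (ae_restrict_mem (aux_diskSet_closed n ε v).measurableSet) _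

lemma aux_mass_toReal_le (n : ℕ) (ε : ℝ) (v : E n) :
    (diskMeasure n ε v Set.univ).toReal ≤ 1 := by
  simpa using ENNReal.toReal_mono ENNReal.one_ne_top (aux_diskMeasure_univ_le n ε v)

lemma aux_integrable {n : ℕ} {ε : ℝ} (hε : 0 ≤ ε) {g : E n → ℝ} {K : ℝ≥0}
    (hg : LipschitzWith K g) (x v : E n) :
    Integrable (fun z => g (x + z)) (diskMeasure n ε v) := by
  haveI := aux_finite n ε v
  refine Integrable.mono' (integrable_const (|g x| + K * ε))
    ((hg.continuous.comp (continuous_const.add continuous_id)).aestronglyMeasurable) ?_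
  filter_upwards [aux_ae_mem n ε v] with z hz
  have h1 : dist (g (x + z)) (g x) ≤ K * ‖z‖ := by
    have := hg.dist_le_mul (x + z) x
    simpa [dist_eq_norm, add_sub_cancel_left] using this
  have h2 : |g (x + z)| - |g x| ≤ |g (x + z) - g x| := abs_sub_abs_le_abs_sub _ _
  rw [Real.dist_eq] at h1
  have h3 : (K : ℝ) * ‖z‖ ≤ K * ε := by
    exact mul_le_mul_of_nonneg_left hz.2 K.coe_nonneg
  simp only [Real.norm_eq_abs]
  linarith

lemma aux_integral_bound {n : ℕ} {ε : ℝ} (hε : 0 ≤ ε) {g : E n → ℝ} {K : ℝ≥0}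
    (hg : LipschitzWith K g) (x v : E n) :
    |∫ z, g (x + z) ∂(diskMeasure n ε v)| ≤ |g x| + K * ε := by
  haveI := aux_finite n ε v
  have hC : (0:ℝ) ≤ |g x| + K * ε := by positivity
  have h := norm_integral_le_of_norm_le_const (μ := diskMeasure n ε v)
    (f := fun z => g (x + z)) (C := |g x| + K * ε) ?_
  · rw [Real.norm_eq_abs] at h
    calc |∫ z, g (x + z) ∂(diskMeasure n ε v)| ≤ (|g x| + K * ε) * (diskMeasure n ε v Set.univ).toReal := h
      _ ≤ (|g x| + K * ε) * 1 := by
          exact mul_le_mul_of_nonneg_left (aux_mass_toReal_le n ε v) hC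
      _ = _ := mul_one _
  · filter_upwards [aux_ae_mem n ε v] with z hz
    have h1 : dist (g (x + z)) (g x) ≤ K * ‖z‖ := by
      have := hg.dist_le_mul (x + z) x
      simpa [dist_eq_norm, add_sub_cancel_left] using this
    have h2 : |g (x + z)| - |g x| ≤ |g (x + z) - g x| := abs_sub_abs_le_abs_sub _ _
    rw [Real.dist_eq] at h1
    have h3 : (K : ℝ) * ‖z‖ ≤ K * ε := mul_le_mul_of_nonneg_left hz.2 K.coe_nonneg
    simp only [Real.norm_eq_abs]
    linarith

lemma aux_Wfun_bound {n : ℕ} {ε α β : ℝ} (hε : 0 ≤ ε) (hα : 0 ≤ α) (hβ : 0 ≤ β)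
    (hαβ : α + β = 1) {g : E n → ℝ} {K : ℝ≥0} (hg : LipschitzWith K g) (x : E n)
    {v : E n} (hv : v ∈ sphere (0 : E n) ε) :
    |Wfun n ε α β g x v| ≤ |g x| + K * ε := by
  have hvn : ‖v‖ = ε := by simpa using mem_sphere_zero_iff_norm.mp hv
  have h1 : |g (x + v)| ≤ |g x| + K * ε := by
    have hd : dist (g (x + v)) (g x) ≤ K * ‖v‖ := by
      have := hg.dist_le_mul (x + v) x
      simpa [dist_eq_norm, add_sub_cancel_left] using this
    rw [Real.dist_eq, hvn] at hd
    have := abs_sub_abs_le_abs_sub (g (x + v)) (g x)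
    linarith
  have h2 := aux_integral_bound hε hg x v
  calc |Wfun n ε α β g x v| ≤ α * |g (x + v)| + β * |∫ z, g (x + z) ∂(diskMeasure n ε v)| := by
        rw [Wfun]
        refine (abs_add_le _ _).trans ?_
        rw [abs_mul, abs_mul, abs_of_nonneg hα, abs_of_nonneg hβ]
    _ ≤ α * (|g x| + K * ε) + β * (|g x| + K * ε) := by
        gcongr
    _ = |g x| + K * ε := by rw [← add_mul, hαβ, one_mul]

lemma aux_Wfun_lip {n : ℕ} {ε α β : ℝ} (hε : 0 ≤ ε) (hα : 0 ≤ α) (hβ : 0 ≤ β)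
    (hαβ : α + β = 1) {g : E n → ℝ} {K : ℝ≥0} (hg : LipschitzWith K g) (x y v : E n) :
    |Wfun n ε α β g x v - Wfun n ε α β g y v| ≤ K * dist x y := by
  haveI := aux_finite n ε v
  have hint : ∫ z, g (x + z) ∂(diskMeasure n ε v) - ∫ z, g (y + z) ∂(diskMeasure n ε v)
      = ∫ z, (g (x + z) - g (y + z)) ∂(diskMeasure n ε v) :=
    (integral_sub (aux_integrable hε hg x v) (aux_integrable hε hg y v)).symm
  have h2 : |∫ z, (g (x + z) - g (y + z)) ∂(diskMeasure n ε v)| ≤ K * dist x y := by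
    have h := norm_integral_le_of_norm_le_const (μ := diskMeasure n ε v)
      (f := fun z => g (x + z) - g (y + z)) (C := K * dist x y) ?_
    · rw [Real.norm_eq_abs] at h
      calc |∫ z, (g (x + z) - g (y + z)) ∂(diskMeasure n ε v)|
          ≤ (K * dist x y) * (diskMeasure n ε v Set.univ).toReal := h
        _ ≤ (K * dist x y) * 1 := by
            exact mul_le_mul_of_nonneg_left (aux_mass_toReal_le n ε v) (by positivity)
        _ = _ := mul_one _
    · refine ae_of_all _ fun z => ?_
      have := hg.dist_le_mul (x + z) (y + z)
      rw [dist_add_right] at this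
      simpa [Real.dist_eq] using this
  have h1 : |g (x + v) - g (y + v)| ≤ K * dist x y := by
    have := hg.dist_le_mul (x + v) (y + v)
    rw [dist_add_right] at this
    simpa [Real.dist_eq] using this
  calc |Wfun n ε α β g x v - Wfun n ε α β g y v|
      = |α * (g (x + v) - g (y + v)) + β * (∫ z, (g (x + z) - g (y + z)) ∂(diskMeasure n ε v))| := by
        rw [Wfun, Wfun, ← hint]; ring_nf
    _ ≤ α * |g (x + v) - g (y + v)| + β * |∫ z, (g (x + z) - g (y + z)) ∂(diskMeasure n ε v)| := by
        refine (abs_add_le _ _).trans ?_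
        rw [abs_mul, abs_mul, abs_of_nonneg hα, abs_of_nonneg hβ]
    _ ≤ α * (K * dist x y) + β * (K * dist x y) := by gcongr
    _ = K * dist x y := by rw [← add_mul, hαβ, one_mul]

lemma aux_csSup_bound {γ : Type*} {φ : γ → ℝ} {s : Set γ} (hs : s.Nonempty) {C : ℝ}
    (hφ : ∀ i ∈ s, |φ i| ≤ C) : |sSup (φ '' s)| ≤ C := by
  have hs' := hs.image φ
  obtain ⟨i0, hi0⟩ := hs
  have hbdd : BddAbove (φ '' s) := ⟨C, fun a ⟨i, hi, h⟩ => h ▸ (abs_le.1 (hφ i hi)).2⟩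
  rw [abs_le]
  constructor
  · exact le_trans (abs_le.1 (hφ i0 hi0)).1 (le_csSup hbdd ⟨i0, hi0, rfl⟩)
  · exact csSup_le hs' fun a ⟨i, hi, h⟩ => h ▸ (abs_le.1 (hφ i hi)).2

lemma aux_csInf_bound {γ : Type*} {φ : γ → ℝ} {s : Set γ} (hs : s.Nonempty) {C : ℝ}
    (hφ : ∀ i ∈ s, |φ i| ≤ C) : |sInf (φ '' s)| ≤ C := by
  have hs' := hs.image φ
  obtain ⟨i0, hi0⟩ := hs
  have hbdd : BddBelow (φ '' s) := ⟨-C, fun a ⟨i, hi, h⟩ => h ▸ (abs_le.1 (hφ i hi)).1⟩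
  rw [abs_le]
  constructor
  · exact le_csInf hs' fun a ⟨i, hi, h⟩ => h ▸ (abs_le.1 (hφ i hi)).1
  · exact le_trans (csInf_le hbdd ⟨i0, hi0, rfl⟩) (abs_le.1 (hφ i0 hi0)).2

lemma aux_csSup_lip {γ : Type*} {φ ψ : γ → ℝ} {s : Set γ} (hs : s.Nonempty) {C r : ℝ}
    (hφ : ∀ i ∈ s, |φ i| ≤ C) (hψ : ∀ i ∈ s, |ψ i| ≤ C)
    (h : ∀ i ∈ s, |φ i - ψ i| ≤ r) : |sSup (φ '' s) - sSup (ψ '' s)| ≤ r := by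
  have hbφ : BddAbove (φ '' s) := ⟨C, fun a ⟨i, hi, hh⟩ => hh ▸ (abs_le.1 (hφ i hi)).2⟩
  have hbψ : BddAbove (ψ '' s) := ⟨C, fun a ⟨i, hi, hh⟩ => hh ▸ (abs_le.1 (hψ i hi)).2⟩
  rw [abs_sub_le_iff]
  constructor
  · rw [sub_le_iff_le_add]
    refine csSup_le (hs.image φ) fun a ⟨i, hi, hh⟩ => ?_
    subst hh
    have h1 : ψ i ≤ sSup (ψ '' s) := le_csSup hbψ ⟨i, hi, rfl⟩
    have h2 := (abs_le.1 (h i hi)).2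
    linarith
  · rw [sub_le_iff_le_add]
    refine csSup_le (hs.image ψ) fun a ⟨i, hi, hh⟩ => ?_
    subst hh
    have h1 : φ i ≤ sSup (φ '' s) := le_csSup hbφ ⟨i, hi, rfl⟩
    have h2 := (abs_le.1 (h i hi)).1
    linarith

lemma aux_csInf_lip {γ : Type*} {φ ψ : γ → ℝ} {s : Set γ} (hs : s.Nonempty) {C r : ℝ}
    (hφ : ∀ i ∈ s, |φ i| ≤ C) (hψ : ∀ i ∈ s, |ψ i| ≤ C)
    (h : ∀ i ∈ s, |φ i - ψ i| ≤ r) : |sInf (φ '' s) - sInf (ψ '' s)| ≤ r := by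
  have hbφ : BddBelow (φ '' s) := ⟨-C, fun a ⟨i, hi, hh⟩ => hh ▸ (abs_le.1 (hφ i hi)).1⟩
  have hbψ : BddBelow (ψ '' s) := ⟨-C, fun a ⟨i, hi, hh⟩ => hh ▸ (abs_le.1 (hψ i hi)).1⟩
  rw [abs_sub_le_iff]
  constructor
  · have h1 : sInf (φ '' s) - r ≤ sInf (ψ '' s) := by
      refine le_csInf (hs.image ψ) fun a ⟨i, hi, hh⟩ => ?_
      subst hh
      have h2 := csInf_le hbφ ⟨i, hi, rfl⟩
      have h3 := (abs_le.1 (h i hi)).2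
      linarith
    linarith
  · have h1 : sInf (ψ '' s) - r ≤ sInf (φ '' s) := by
      refine le_csInf (hs.image φ) fun a ⟨i, hi, hh⟩ => ?_
      subst hh
      have h2 := csInf_le hbψ ⟨i, hi, rfl⟩
      have h3 := (abs_le.1 (h i hi)).1
      linarith
    linarith

theorem stmt_3 (n : ℕ) (hn : 2 ≤ n) (ε : ℝ) (hε : 0 < ε)
    (Ω : Set (E n)) (hΩo : IsOpen Ω) (hΩc : IsConnected Ω) (hΩb : Bornology.IsBounded Ω)
    (α β : ℝ) (hα : 0 ≤ α) (hβ : 0 ≤ β) (hαβ : α + β = 1)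
    (F : E n → ℝ) (KF : ℝ≥0) (hF : LipschitzOnWith KF F (Omegaeps n ε Ω))
    (MF : ℝ) (hFb : ∀ x ∈ Omegaeps n ε Ω, |F x| ≤ MF)
    (u : E n → ℝ) (M : ℝ) (hub : ∀ x ∈ Omegaeps n ε Ω, |u x| ≤ M)
    (Ku : ℝ≥0) (hu : LipschitzOnWith Ku u (Omegaeps n ε Ω)) :
    ∃ K : ℝ≥0, LipschitzOnWith K (Iop n ε α β Ω F u) (Omegaeps n ε Ω) := by
  classical
  obtain ⟨g, hg, hgeq⟩ := hu.extend_real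
  have hεle : (0:ℝ) ≤ ε := hε.le
  have hinv : (0:ℝ) ≤ ε⁻¹ := inv_nonneg.mpr hεle
  have hΩne : Ω.Nonempty := hΩc.nonempty
  haveI : Nontrivial (E n) := by
    refine ⟨⟨EuclideanSpace.single (⟨0, by omega⟩ : Fin n) (1:ℝ), 0, ?_⟩⟩
    intro h
    have h2 := congrArg (fun w : E n => w (⟨0, by omega⟩ : Fin n)) h
    simp [EuclideanSpace.single_apply] at h2
  have hΩnu : Ω ≠ univ := by
    intro h
    exact NormedSpace.unbounded_univ ℝ (E n) (h ▸ hΩb)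
  have hsub : Ω ⊆ Omegaeps n ε Ω := subset_union_left
  obtain ⟨x0, hx0⟩ := hΩne
  have hM : 0 ≤ M := (abs_nonneg _).trans (hub x0 (hsub hx0))
  have hMF : 0 ≤ MF := (abs_nonneg _).trans (hFb x0 (hsub hx0))
  have hsph : (sphere (0 : E n) ε).Nonempty := NormedSpace.sphere_nonempty.mpr hεle
  -- frontier distance lemmas
  have hfr1 : ∀ x ∈ Ω, ∀ y, y ∉ Ω → infDist x (frontier Ω) ≤ dist x y := by
    intro x hx y hy
    obtain ⟨w, hw, hwd⟩ := exists_mem_frontier_infDist_compl_eq_dist hx hΩnu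
    calc infDist x (frontier Ω) ≤ dist x w := infDist_le_dist_of_mem hw
      _ = infDist x Ωᶜ := hwd.symm
      _ ≤ dist x y := infDist_le_dist_of_mem hy
  have hfr2 : ∀ x ∈ Ω, ∀ y, y ∉ Ω → infDist y (frontier Ω) ≤ dist x y := by
    intro x hx y hy
    have hyc : y ∈ Ωᶜ := hy
    have hnu : Ωᶜ ≠ univ := by
      intro h
      have : x ∈ Ωᶜ := h ▸ mem_univ x
      exact this hx
    obtain ⟨w, hw, hwd⟩ := exists_mem_frontier_infDist_compl_eq_dist hyc hnu
    rw [frontier_compl] at hw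
    calc infDist y (frontier Ω) ≤ dist y w := infDist_le_dist_of_mem hw
      _ = infDist y (Ωᶜ)ᶜ := hwd.symm
      _ ≤ dist y x := infDist_le_dist_of_mem (by rw [compl_compl]; exact hx)
      _ = dist x y := dist_comm y x
  have hmem : ∀ x ∈ Ω, ∀ z : E n, ‖z‖ ≤ ε → x + z ∈ Omegaeps n ε Ω := by
    intro x hx z hz
    by_cases h : x + z ∈ Ω
    · exact Or.inl h
    · refine Or.inr ⟨h, ?_⟩
      have h1 := hfr2 x hx (x + z) h
      have h2 : dist x (x + z) = ‖z‖ := by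
        rw [dist_eq_norm]
        simp
      rw [h2] at h1
      linarith
  have hgb : ∀ x ∈ Omegaeps n ε Ω, |g x| ≤ M := by
    intro x hx
    rw [← hgeq hx]
    exact hub x hx
  -- bounds for the W family
  have hWb : ∀ x : E n, ∀ v ∈ sphere (0 : E n) ε,
      |Wfun n ε α β g x v| ≤ |g x| + Ku * ε := fun x v hv =>
    aux_Wfun_bound hεle hα hβ hαβ hg x hv
  have hWl : ∀ x y v : E n, |Wfun n ε α β g x v - Wfun n ε α β g y v| ≤ Ku * dist x y :=
    fun x y v => aux_Wfun_lip hεle hα hβ hαβ hg x y v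
  -- sup and inf Lipschitz and bounds
  have hSlip : ∀ x y : E n,
      |sSup (Wfun n ε α β g x '' sphere (0 : E n) ε) -
        sSup (Wfun n ε α β g y '' sphere (0 : E n) ε)| ≤ Ku * dist x y := by
    intro x y
    refine aux_csSup_lip hsph (C := max |g x| |g y| + Ku * ε) ?_ ?_ ?_
    · intro v hv
      exact (hWb x v hv).trans (by gcongr; exact le_max_left _ _)
    · intro v hv
      exact (hWb y v hv).trans (by gcongr; exact le_max_right _ _)
    · intro v _
      exact hWl x y v
  have hTlip : ∀ x y : E n,
      |sInf (Wfun n ε α β g x '' sphere (0 : E n) ε) -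
        sInf (Wfun n ε α β g y '' sphere (0 : E n) ε)| ≤ Ku * dist x y := by
    intro x y
    refine aux_csInf_lip hsph (C := max |g x| |g y| + Ku * ε) ?_ ?_ ?_
    · intro v hv
      exact (hWb x v hv).trans (by gcongr; exact le_max_left _ _)
    · intro v hv
      exact (hWb y v hv).trans (by gcongr; exact le_max_right _ _)
    · intro v _
      exact hWl x y v
  have hSb : ∀ x ∈ Omegaeps n ε Ω,
      |sSup (Wfun n ε α β g x '' sphere (0 : E n) ε)| ≤ M + Ku * ε := by
    intro x hx
    refine (aux_csSup_bound hsph (hWb x)).trans ?_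
    gcongr
    exact hgb x hx
  have hTb : ∀ x ∈ Omegaeps n ε Ω,
      |sInf (Wfun n ε α β g x '' sphere (0 : E n) ε)| ≤ M + Ku * ε := by
    intro x hx
    refine (aux_csInf_bound hsph (hWb x)).trans ?_
    gcongr
    exact hgb x hx
  -- cutoff facts
  have hc01 : ∀ x : E n, 0 ≤ cutoff n ε Ω x ∧ cutoff n ε Ω x ≤ 1 := by
    intro x
    unfold cutoff
    split_ifs with h1 h2
    · have hd0 : 0 ≤ infDist x (frontier Ω) := infDist_nonneg
      have : ε⁻¹ * infDist x (frontier Ω) ≤ ε⁻¹ * ε := by gcongr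
      rw [inv_mul_cancel₀ hε.ne'] at this
      constructor <;> [linarith; nlinarith]
    · exact ⟨le_refl 0, zero_le_one⟩
    · exact ⟨zero_le_one, le_refl 1⟩
  have hcΩ : ∀ x ∈ Ω, cutoff n ε Ω x = max (1 - ε⁻¹ * infDist x (frontier Ω)) 0 := by
    intro x hx
    unfold cutoff
    rw [if_pos hx]
    split_ifs with h
    · rw [max_eq_left]
      have : ε⁻¹ * infDist x (frontier Ω) ≤ ε⁻¹ * ε := by gcongr
      rw [inv_mul_cancel₀ hε.ne'] at this
      linarith
    · rw [max_eq_right]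
      push_neg at h
      have : ε⁻¹ * ε ≤ ε⁻¹ * infDist x (frontier Ω) := by gcongr
      rw [inv_mul_cancel₀ hε.ne'] at this
      linarith
  have hcout : ∀ x, x ∉ Ω → cutoff n ε Ω x = 1 := by
    intro x hx
    unfold cutoff
    rw [if_neg hx]
  have hdd : ∀ x y : E n, |infDist x (frontier Ω) - infDist y (frontier Ω)| ≤ dist x y := by
    intro x y
    rw [abs_sub_le_iff]
    constructor
    · have := infDist_le_infDist_add_dist (x := x) (y := y) (s := frontier Ω)
      linarith
    · have := infDist_le_infDist_add_dist (x := y) (y := x) (s := frontier Ω)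
      rw [dist_comm] at this
      linarith
  have hclip : ∀ x ∈ Omegaeps n ε Ω, ∀ y ∈ Omegaeps n ε Ω,
      |cutoff n ε Ω x - cutoff n ε Ω y| ≤ ε⁻¹ * dist x y := by
    intro x hx y hy
    by_cases hxΩ : x ∈ Ω <;> by_cases hyΩ : y ∈ Ω
    · rw [hcΩ x hxΩ, hcΩ y hyΩ]
      refine (abs_max_sub_max_le_abs _ _ _).trans ?_
      have h1 : (1 - ε⁻¹ * infDist x (frontier Ω)) - (1 - ε⁻¹ * infDist y (frontier Ω))
          = ε⁻¹ * (infDist y (frontier Ω) - infDist x (frontier Ω)) := by ring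
      rw [h1, abs_mul, abs_of_nonneg hinv]
      gcongr
      have h5 := hdd y x
      rwa [dist_comm] at h5
    · rw [hcout y hyΩ]
      have h1 := hfr1 x hxΩ y hyΩ
      have h2 : 1 - ε⁻¹ * infDist x (frontier Ω) ≤ cutoff n ε Ω x := by
        rw [hcΩ x hxΩ]; exact le_max_left _ _
      have h3 := (hc01 x).2
      have h4 : ε⁻¹ * infDist x (frontier Ω) ≤ ε⁻¹ * dist x y := by gcongr
      rw [abs_le]
      constructor <;> linarith [mul_nonneg hinv (dist_nonneg (x := x) (y := y))]
    · rw [hcout x hxΩ]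
      have h1 := hfr1 y hyΩ x hxΩ
      rw [dist_comm] at h1
      have h2 : 1 - ε⁻¹ * infDist y (frontier Ω) ≤ cutoff n ε Ω y := by
        rw [hcΩ y hyΩ]; exact le_max_left _ _
      have h3 := (hc01 y).2
      have h4 : ε⁻¹ * infDist y (frontier Ω) ≤ ε⁻¹ * dist x y := by gcongr
      rw [abs_le]
      constructor <;> linarith [mul_nonneg hinv (dist_nonneg (x := x) (y := y))]
    · rw [hcout x hxΩ, hcout y hyΩ]
      simp [mul_nonneg hinv (dist_nonneg (x := x) (y := y))]
  -- the representation of Iop on Omegaeps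
  have hEq : ∀ x ∈ Omegaeps n ε Ω, Iop n ε α β Ω F u x =
      (1 - cutoff n ε Ω x) / 2 *
        (sSup (Wfun n ε α β g x '' sphere (0 : E n) ε) +
          sInf (Wfun n ε α β g x '' sphere (0 : E n) ε)) +
        cutoff n ε Ω x * F x := by
    intro x hx
    unfold Iop
    by_cases hxΩ : x ∈ Ω
    · rw [if_pos hxΩ]
      have himg : Wfun n ε α β u x '' sphere (0 : E n) ε
          = Wfun n ε α β g x '' sphere (0 : E n) ε := by
        refine Set.image_congr fun v hv => ?_
        have hvn : ‖v‖ = ε := by simpa using mem_sphere_zero_iff_norm.mp hv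
        have h1 : u (x + v) = g (x + v) := hgeq (hmem x hxΩ v hvn.le)
        have h2 : ∫ z, u (x + z) ∂(diskMeasure n ε v)
            = ∫ z, g (x + z) ∂(diskMeasure n ε v) := by
          refine integral_congr_ae ?_
          filter_upwards [aux_ae_mem n ε v] with z hz
          exact hgeq (hmem x hxΩ z hz.2)
        rw [Wfun, Wfun, h1, h2]
      rw [himg]
    · rw [if_neg hxΩ, hcout x hxΩ]
      ring
  -- final assembly
  set B : ℝ := M + Ku * ε with hB
  have hB0 : 0 ≤ B := by positivity
  refine ⟨Real.toNNReal (ε⁻¹ * B + Ku + ε⁻¹ * MF + KF), ?_⟩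
  rw [lipschitzOnWith_iff_dist_le_mul]
  intro x hx y hy
  rw [hEq x hx, hEq y hy, Real.dist_eq, Real.coe_toNNReal _ (by positivity)]
  set cx := cutoff n ε Ω x
  set cy := cutoff n ε Ω y
  set Sx := sSup (Wfun n ε α β g x '' sphere (0 : E n) ε)
  set Sy := sSup (Wfun n ε α β g y '' sphere (0 : E n) ε)
  set Tx := sInf (Wfun n ε α β g x '' sphere (0 : E n) ε)
  set Ty := sInf (Wfun n ε α β g y '' sphere (0 : E n) ε)
  set d := dist x y with hd
  have hd0 : 0 ≤ d := dist_nonneg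
  have b1 : |cy - cx| ≤ ε⁻¹ * d := by
    rw [abs_sub_comm]
    exact hclip x hx y hy
  have b1' : |cx - cy| ≤ ε⁻¹ * d := hclip x hx y hy
  have b2 : |Sx + Tx| ≤ 2 * B := by
    refine (abs_add_le _ _).trans ?_
    have := hSb x hx
    have := hTb x hx
    linarith
  have b3 : |Sx + Tx - (Sy + Ty)| ≤ 2 * (Ku * d) := by
    have h1 : Sx + Tx - (Sy + Ty) = (Sx - Sy) + (Tx - Ty) := by ring
    rw [h1]
    refine (abs_add_le _ _).trans ?_
    have := hSlip x y
    have := hTlip x y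
    linarith
  have b5 : |F x| ≤ MF := hFb x hx
  have b6 : |F x - F y| ≤ KF * d := by
    have := lipschitzOnWith_iff_dist_le_mul.mp hF x hx y hy
    rwa [Real.dist_eq] at this
  have hcy0 := (hc01 y).1
  have hcy1 := (hc01 y).2
  have key : (1 - cx) / 2 * (Sx + Tx) + cx * F x - ((1 - cy) / 2 * (Sy + Ty) + cy * F y)
      = (cy - cx) * (Sx + Tx) / 2 + (1 - cy) / 2 * (Sx + Tx - (Sy + Ty))
        + (cx - cy) * F x + cy * (F x - F y) := by ring
  rw [key]
  have e1 : |(cy - cx) * (Sx + Tx) / 2| ≤ ε⁻¹ * d * B := by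
    rw [abs_div, abs_mul]
    have h2 : |(2:ℝ)| = 2 := by norm_num
    rw [h2]
    have : |cy - cx| * |Sx + Tx| ≤ (ε⁻¹ * d) * (2 * B) :=
      mul_le_mul b1 b2 (abs_nonneg _) (mul_nonneg hinv hd0)
    linarith
  have e2 : |(1 - cy) / 2 * (Sx + Tx - (Sy + Ty))| ≤ Ku * d := by
    rw [abs_mul, abs_div]
    have h2 : |(2:ℝ)| = 2 := by norm_num
    rw [h2, abs_of_nonneg (by linarith : (0:ℝ) ≤ 1 - cy)]
    have : (1 - cy) / 2 * |Sx + Tx - (Sy + Ty)| ≤ (1/2) * (2 * (Ku * d)) := by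
      refine mul_le_mul (by linarith) b3 (abs_nonneg _) (by norm_num)
    linarith
  have e3 : |(cx - cy) * F x| ≤ ε⁻¹ * d * MF := by
    rw [abs_mul]
    exact mul_le_mul b1' b5 (abs_nonneg _) (mul_nonneg hinv hd0)
  have e4 : |cy * (F x - F y)| ≤ KF * d := by
    rw [abs_mul, abs_of_nonneg hcy0]
    calc cy * |F x - F y| ≤ 1 * (KF * d) :=
        mul_le_mul hcy1 b6 (abs_nonneg _) zero_le_one
      _ = KF * d := one_mul _
  calc |(cy - cx) * (Sx + Tx) / 2 + (1 - cy) / 2 * (Sx + Tx - (Sy + Ty))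
        + (cx - cy) * F x + cy * (F x - F y)|
      ≤ |(cy - cx) * (Sx + Tx) / 2 + (1 - cy) / 2 * (Sx + Tx - (Sy + Ty))
        + (cx - cy) * F x| + |cy * (F x - F y)| := abs_add_le _ _
    _ ≤ |(cy - cx) * (Sx + Tx) / 2 + (1 - cy) / 2 * (Sx + Tx - (Sy + Ty))|
        + |(cx - cy) * F x| + |cy * (F x - F y)| := by
        have := abs_add_le ((cy - cx) * (Sx + Tx) / 2 + (1 - cy) / 2 * (Sx + Tx - (Sy + Ty)))
          ((cx - cy) * F x)
        linarith
    _ ≤ |(cy - cx) * (Sx + Tx) / 2| + |(1 - cy) / 2 * (Sx + Tx - (Sy + Ty))|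
        + |(cx - cy) * F x| + |cy * (F x - F y)| := by
        have := abs_add_le ((cy - cx) * (Sx + Tx) / 2) ((1 - cy) / 2 * (Sx + Tx - (Sy + Ty)))
        linarith
    _ ≤ ε⁻¹ * d * B + Ku * d + ε⁻¹ * d * MF + KF * d := by linarith
    _ = (ε⁻¹ * B + ↑Ku + ε⁻¹ * MF + ↑KF) * d := by ring
end
end

section
/- There exists a constant C > 0, independent of the vectors involved, such that for any two unit vectors v₁, v₂ ∈ ℝⁿ there is a linear isometry (rotation) L : ℝⁿ → ℝⁿ with L(v₁) = v₂ (so L maps the orthogonal complement v₁^⊥ onto v₂^⊥) and ‖L(z) − z‖ ≤ C·‖z‖·‖v₁ − v₂‖ for all z ∈ ℝⁿ. -/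
/-! Reflecting first in the line `ℝ ∙ v₁` and then in the line through the unit bisector
`c = (v₁ + v₂) / ‖v₁ + v₂‖` fixes `v₁` and then sends it to `v₂`. Since the second reflection is an
involution, the displacement `‖L z - z‖` equals the distance between the two reflections of `z`,
which is at most `4 ‖v₁ - c‖ ‖z‖`, and `‖v₁ - c‖ ≤ ‖v₁ - v₂‖` because `c` bisects the angle. When
`v₂ = -v₁` there is no bisector, but then `-id` works, as `‖v₁ - v₂‖ = 2`. -/

open Metric
open scoped RealInnerProductSpace

noncomputable section

open Submodule

section

variable {F : Type*} [NormedAddCommGroup F] [InnerProductSpace ℝ F]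

theorem reflection_span_unit_apply {a : F} (ha : ‖a‖ = 1) (z : F) :
    reflection (ℝ ∙ a) z = (2 * ⟪a, z⟫) • a - z := by
  rw [reflection_apply, starProjection_unit_singleton ℝ ha, two_smul, two_mul, add_smul]

theorem norm_reflection_span_sub_reflection_span_le {a b : F} (ha : ‖a‖ = 1) (hb : ‖b‖ = 1)
    (z : F) : ‖reflection (ℝ ∙ a) z - reflection (ℝ ∙ b) z‖ ≤ 4 * ‖a - b‖ * ‖z‖ := by
  have hsplit : reflection (ℝ ∙ a) z - reflection (ℝ ∙ b) z =
      (2 * ⟪a - b, z⟫) • a + (2 * ⟪b, z⟫) • (a - b) := by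
    rw [reflection_span_unit_apply ha, reflection_span_unit_apply hb, inner_sub_left]
    module
  calc ‖reflection (ℝ ∙ a) z - reflection (ℝ ∙ b) z‖
      ≤ 2 * |⟪a - b, z⟫| * ‖a‖ + 2 * |⟪b, z⟫| * ‖a - b‖ := by
        rw [hsplit]
        refine (norm_add_le _ _).trans_eq ?_
        simp only [norm_smul, Real.norm_eq_abs, abs_mul, abs_two]
    _ ≤ 2 * (‖a - b‖ * ‖z‖) * 1 + 2 * (‖b‖ * ‖z‖) * ‖a - b‖ := by
        rw [ha]
        gcongr <;> exact abs_real_inner_le_norm _ _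
    _ = 4 * ‖a - b‖ * ‖z‖ := by rw [hb]; ring

theorem norm_reflection_trans_reflection_sub_self (K K' : Submodule ℝ F)
    [K.HasOrthogonalProjection] [K'.HasOrthogonalProjection] (z : F) :
    ‖(reflection K).trans (reflection K') z - z‖ = ‖reflection K z - reflection K' z‖ := by
  have h := (reflection K').norm_map (reflection K z - reflection K' z)
  rwa [map_sub, reflection_reflection] at h

theorem reflection_span_add_apply_left {a b : F} (h : ‖a‖ = ‖b‖) :
    reflection (ℝ ∙ (a + b)) a = b := by
  have h' := reflection_sub (F := F) (v := a) (w := -b) (by rwa [norm_neg])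
  rw [sub_neg_eq_add, reflection_orthogonal_apply] at h'
  exact neg_injective h'

theorem norm_inv_norm_smul_add_sub_self_le {a b : F} (ha : ‖a‖ = 1) (hb : ‖b‖ = 1) (hab : a + b ≠ 0) :
    ‖‖a + b‖⁻¹ • (a + b) - a‖ ≤ ‖a - b‖ := by
  set s := ‖a + b‖
  have hs : 0 < s := norm_pos_iff.mpr hab
  have hinner : ⟪a + b, a⟫ = s ^ 2 / 2 := by
    rw [← real_inner_self_eq_norm_sq]
    simp only [inner_add_left, inner_add_right, real_inner_self_eq_norm_sq, ha, hb,
      real_inner_comm a b]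
    ring
  have hunit : ‖s⁻¹ • (a + b)‖ = 1 := by
    rw [norm_smul, norm_inv, norm_norm, inv_mul_cancel₀ hs.ne']
  have hsq : ‖s⁻¹ • (a + b) - a‖ ^ 2 = 2 - s := by
    rw [norm_sub_sq_real, hunit, real_inner_smul_left, hinner, ha]
    field_simp
    ring
  have hpar : ‖a - b‖ ^ 2 = 4 - s ^ 2 := by
    have := parallelogram_law_with_norm ℝ a b
    rw [ha, hb] at this
    linarith
  have hs2 : s ≤ 2 := (norm_add_le a b).trans (by rw [ha, hb]; norm_num)
  rw [← sq_le_sq₀ (norm_nonneg _) (norm_nonneg _), hsq, hpar]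
  nlinarith

theorem exists_linearIsometryEquiv_apply_eq_and_norm_sub_le {a b : F} (ha : ‖a‖ = 1)
    (hb : ‖b‖ = 1) : ∃ L : F ≃ₗᵢ[ℝ] F, L a = b ∧ ∀ z, ‖L z - z‖ ≤ 4 * ‖z‖ * ‖a - b‖ := by
  by_cases hab : a + b = 0
  · obtain rfl : b = -a := eq_neg_of_add_eq_zero_right hab
    refine ⟨LinearIsometryEquiv.neg ℝ, rfl, fun z => ?_⟩
    have htwo : ∀ x : F, ‖x + x‖ = 2 * ‖x‖ := fun x => by
      rw [← two_smul ℝ, norm_smul, Real.norm_two]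
    calc ‖-z - z‖ = 2 * ‖z‖ := by rw [← neg_add', norm_neg, htwo]
      _ ≤ 4 * ‖z‖ * ‖a - -a‖ := by
        rw [sub_neg_eq_add, htwo, ha]; nlinarith [norm_nonneg z]
  · set c := ‖a + b‖⁻¹ • (a + b)
    have hc : ‖c‖ = 1 := norm_smul_inv_norm hab
    have hspan : ℝ ∙ c = ℝ ∙ (a + b) :=
      span_singleton_smul_eq (inv_ne_zero (norm_ne_zero_iff.mpr hab)).isUnit _
    refine ⟨(reflection (ℝ ∙ a)).trans (reflection (ℝ ∙ c)), ?_, fun z => ?_⟩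
    · rw [LinearIsometryEquiv.trans_apply,
        reflection_mem_subspace_eq_self (mem_span_singleton_self a)]
      simp only [hspan]
      exact reflection_span_add_apply_left (ha.trans hb.symm)
    · rw [norm_reflection_trans_reflection_sub_self]
      calc _ ≤ 4 * ‖a - c‖ * ‖z‖ := norm_reflection_span_sub_reflection_span_le ha hc z
        _ ≤ 4 * ‖a - b‖ * ‖z‖ := by
          rw [norm_sub_rev]; gcongr; exact norm_inv_norm_smul_add_sub_self_le ha hb hab
        _ = 4 * ‖z‖ * ‖a - b‖ := by ring

end

theorem stmt_7_general (n : ℕ) :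
    ∃ C : ℝ, 0 < C ∧ ∀ v₁ v₂ : E n, ‖v₁‖ = 1 → ‖v₂‖ = 1 →
      ∃ L : E n ≃ₗᵢ[ℝ] E n, L v₁ = v₂ ∧
        ∀ z : E n, ‖L z - z‖ ≤ C * ‖z‖ * ‖v₁ - v₂‖ :=
  ⟨4, by norm_num, fun _ _ h₁ h₂ => exists_linearIsometryEquiv_apply_eq_and_norm_sub_le h₁ h₂⟩

theorem stmt_7 (n : ℕ) (hn : 2 ≤ n) :
    ∃ C : ℝ, 0 < C ∧ ∀ v₁ v₂ : E n, ‖v₁‖ = 1 → ‖v₂‖ = 1 →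
      ∃ L : E n ≃ₗᵢ[ℝ] E n, L v₁ = v₂ ∧
        ∀ z : E n, ‖L z - z‖ ≤ C * ‖z‖ * ‖v₁ - v₂‖ :=
  stmt_7_general n
end
end

section
/- Let u : ℝⁿ → ℝ be Lipschitz with constant L and fix x ∈ ℝⁿ. Then the function h(v) := ∫ u(x+z) dμ_v(z), defined on the sphere {v ∈ ℝⁿ : ‖v‖ = ε}, is continuous; moreover there is a constant C depending only on the dimension n such that |h(v₁) − h(v₂)| ≤ C·L·‖v₁ − v₂‖ for all v₁, v₂ with ‖v₁‖ = ‖v₂‖ = ε. -/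
open MeasureTheory Metric Filter Set
open scoped RealInnerProductSpace ENNReal NNReal Topology Classical

noncomputable section

/-! A rotation `R` taking `v₁` to `v₂` transports `μ_{v₁}` to `μ_{v₂}`, because the Hausdorff
measure is isometry invariant. Choosing `R` as a product of two reflections, it moves each point
of the disk `D_{v₁}` by at most `2‖v₁ - v₂‖`, so the two averages of the `L`-Lipschitz function
`u (x + ·)` differ by at most `2 L ‖v₁ - v₂‖`. -/

namespace Submodule

variable {F : Type*} [NormedAddCommGroup F] [InnerProductSpace ℝ F]

theorem norm_reflection_orthogonal_singleton_sub_self (a z : F) :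
    ‖reflection (ℝ ∙ a)ᗮ z - z‖ = 2 * |⟪a, z⟫| / ‖a‖ := by
  rcases eq_or_ne a 0 with rfl | ha
  · simp [reflection_mem_subspace_eq_self (mem_top (R := ℝ))]
  have : reflection (ℝ ∙ a)ᗮ z - z = (-(2 * ⟪a, z⟫ / ‖a‖ ^ 2)) • a := by
    rw [reflection_orthogonal_apply, reflection_singleton_apply]
    simp only [RCLike.ofReal_real_eq_id, id_eq]
    module
  have ha' : ‖a‖ ≠ 0 := norm_ne_zero_iff.mpr ha
  rw [this, norm_smul, norm_neg, Real.norm_eq_abs, abs_div, abs_mul, abs_two,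
    abs_of_nonneg (sq_nonneg ‖a‖)]
  field_simp

end Submodule

open Submodule in
/-- The reflection in `vᗮ` fixes `z ⊥ v` and sends `v` to `-v`; the reflection exchanging `-v`
and `w` moves `z` by `2|⟪v + w, z⟫| / ‖v + w‖ = 2|⟪v - w, z⟫| / ‖v + w‖`, and `‖v + w‖ ≥ ‖v‖`
unless `v` and `w` are already far apart. -/
theorem exists_linearIsometryEquiv_apply_eq_of_norm_eq {F : Type*} [NormedAddCommGroup F]
    [InnerProductSpace ℝ F] {v w : F} (h : ‖v‖ = ‖w‖) :
    ∃ R : F ≃ₗᵢ[ℝ] F, R v = w ∧ ∀ z, ⟪z, v⟫ = 0 → ‖z‖ ≤ ‖v‖ → ‖R z - z‖ ≤ 2 * ‖v - w‖ := by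
  refine ⟨(reflection (ℝ ∙ v)ᗮ).trans (reflection (ℝ ∙ (-v - w))ᗮ), ?_, fun z hzv hz => ?_⟩
  · simp only [LinearIsometryEquiv.trans_apply, reflection_orthogonalComplement_singleton_eq_neg]
    exact reflection_sub (by rw [norm_neg, h])
  rw [LinearIsometryEquiv.trans_apply, reflection_mem_subspace_eq_self
    (mem_orthogonal_singleton_iff_inner_left.mpr hzv)]
  rcases le_or_gt ‖v‖ ‖v - w‖ with hvw | hvw
  · calc ‖reflection (ℝ ∙ (-v - w))ᗮ z - z‖ ≤ ‖reflection (ℝ ∙ (-v - w))ᗮ z‖ + ‖z‖ :=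
          norm_sub_le _ _
      _ ≤ 2 * ‖v - w‖ := by rw [LinearIsometryEquiv.norm_map]; linarith
  -- parallelogram law: `‖v + w‖² = 4‖v‖² - ‖v - w‖² > 3‖v‖²`
  have hsum : ‖v‖ ≤ ‖-v - w‖ := by
    have := parallelogram_law_with_norm ℝ v w
    rw [← h] at this
    rw [show -v - w = -(v + w) by abel, norm_neg]
    refine (pow_le_pow_iff_left₀ (norm_nonneg _) (norm_nonneg _) two_ne_zero).mp ?_
    nlinarith [mul_self_lt_mul_self (norm_nonneg _) hvw]
  have hinner : |⟪-v - w, z⟫| ≤ ‖v - w‖ * ‖z‖ := by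
    have : ⟪-v - w, z⟫ = ⟪v - w, z⟫ := by
      rw [real_inner_comm] at hzv
      simp only [inner_sub_left, inner_neg_left, hzv]; ring
    rw [this]
    exact abs_real_inner_le_norm _ _
  rw [norm_reflection_orthogonal_singleton_sub_self,
    div_le_iff₀ (by linarith [norm_nonneg (v - w)])]
  nlinarith [norm_nonneg (v - w)]

theorem abs_integral_sub_integral_le_of_lipschitzWith {α X : Type*} [MeasurableSpace α]
    [PseudoMetricSpace X] {μ : Measure α} [IsFiniteMeasure μ] {u : X → ℝ} {L : ℝ≥0}
    (hu : LipschitzWith L u) {f g : α → X} (hf : Integrable (fun a => u (f a)) μ)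
    (hg : Integrable (fun a => u (g a)) μ) {δ : ℝ} (hfg : ∀ᵐ a ∂μ, dist (f a) (g a) ≤ δ) :
    |∫ a, u (f a) ∂μ - ∫ a, u (g a) ∂μ| ≤ L * δ * μ.real univ := by
  rw [← integral_sub hf hg, ← Real.norm_eq_abs]
  refine norm_integral_le_of_norm_le_const (hfg.mono fun a ha => ?_)
  rw [← dist_eq_norm]
  exact (hu.dist_le_mul _ _).trans (by gcongr)

section Disk

variable {n : ℕ} {ε : ℝ}

theorem isClosed_diskSet (v : E n) : IsClosed (diskSet n ε v) :=
  (isClosed_eq (continuous_id.inner continuous_const) continuous_const).inter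
    (isClosed_le continuous_norm continuous_const)

theorem isCompact_diskSet (v : E n) : IsCompact (diskSet n ε v) :=
  isCompact_of_isClosed_isBounded (isClosed_diskSet v) <|
    isBounded_closedBall.subset fun _ hz => mem_closedBall_zero_iff.mpr hz.2

theorem preimage_diskSet (R : E n ≃ₗᵢ[ℝ] E n) (v : E n) :
    R ⁻¹' diskSet n ε (R v) = diskSet n ε v := by
  ext z
  simp [diskSet, LinearIsometryEquiv.inner_map_map]

theorem map_diskMeasure (R : E n ≃ₗᵢ[ℝ] E n) (v : E n) :
    (diskMeasure n ε v).map R = diskMeasure n ε (R v) := by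
  have hR : Measurable R := R.continuous.measurable
  have hμH (d : ℝ) (s : Set (E n)) : μH[d] (R ⁻¹' s) = μH[d] s :=
    R.toIsometryEquiv.hausdorffMeasure_preimage d s
  have hmap (d : ℝ) : (μH[d] : Measure (E n)).map R = μH[d] :=
    R.toIsometryEquiv.map_hausdorffMeasure d
  rw [diskMeasure, diskMeasure, Measure.map_smul, ← preimage_diskSet R v, hμH,
    ← Measure.restrict_map hR (isClosed_diskSet _).measurableSet, hmap]

theorem ae_mem_diskSet (v : E n) : ∀ᵐ z ∂diskMeasure n ε v, z ∈ diskSet n ε v :=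
  Measure.ae_smul_measure (ae_restrict_mem (isClosed_diskSet v).measurableSet) _

theorem Continuous.integrable_diskMeasure {f : E n → ℝ} (hf : Continuous f) (v : E n) :
    Integrable f (diskMeasure n ε v) := by
  obtain ⟨C, hC⟩ := (isCompact_diskSet v).exists_bound_of_continuousOn hf.continuousOn
  exact .of_bound hf.aestronglyMeasurable C ((ae_mem_diskSet v).mono hC)

end Disk

theorem abs_integral_diskMeasure_sub_le {n : ℕ} {ε : ℝ} {u : E n → ℝ} {L : ℝ≥0}
    (hu : LipschitzWith L u) (x : E n) {v₁ v₂ : E n} (h₁ : ‖v₁‖ = ε) (h₂ : ‖v₂‖ = ε) :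
    |(∫ z, u (x + z) ∂diskMeasure n ε v₁) - ∫ z, u (x + z) ∂diskMeasure n ε v₂|
      ≤ 2 * L * ‖v₁ - v₂‖ := by
  obtain ⟨R, rfl, hR⟩ := exists_linearIsometryEquiv_apply_eq_of_norm_eq (h₁.trans h₂.symm)
  have hcont : Continuous fun z => u (x + z) := hu.continuous.comp (continuous_const_add x)
  rw [← map_diskMeasure, integral_map R.continuous.aemeasurable hcont.aestronglyMeasurable]
  have hdist : ∀ᵐ z ∂diskMeasure n ε v₁, dist (x + z) (x + R z) ≤ 2 * ‖v₁ - R v₁‖ :=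
    (ae_mem_diskSet v₁).mono fun z hz => by
      rw [dist_add_left, dist_comm, dist_eq_norm]
      exact hR z hz.1 (h₁ ▸ hz.2)
  calc _ ≤ L * (2 * ‖v₁ - R v₁‖) * (diskMeasure n ε v₁).real univ :=
        abs_integral_sub_integral_le_of_lipschitzWith hu (hcont.integrable_diskMeasure v₁)
          ((hcont.comp R.continuous).integrable_diskMeasure v₁) hdist
    _ ≤ L * (2 * ‖v₁ - R v₁‖) * 1 := by
        gcongr
        exact ENNReal.toReal_le_of_le_ofReal zero_le_one
          (by rw [ENNReal.ofReal_one]; exact diskMeasure_univ_le_one v₁)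
    _ = 2 * L * ‖v₁ - R v₁‖ := by ring

theorem stmt_8_general (n : ℕ) :
    ∃ C : ℝ, ∀ ε : ℝ, 0 < ε → ∀ (u : E n → ℝ) (L : ℝ≥0), LipschitzWith L u →
      ∀ x : E n,
        ContinuousOn (fun v => ∫ z, u (x + z) ∂(diskMeasure n ε v))
          (sphere (0 : E n) ε) ∧
        ∀ v₁ ∈ sphere (0 : E n) ε, ∀ v₂ ∈ sphere (0 : E n) ε,
          |(∫ z, u (x + z) ∂(diskMeasure n ε v₁)) -
              ∫ z, u (x + z) ∂(diskMeasure n ε v₂)| ≤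
            C * L * ‖v₁ - v₂‖ := by
  refine ⟨2, fun ε _ u L hu x => ?_⟩
  have hlip : ∀ v₁ ∈ sphere (0 : E n) ε, ∀ v₂ ∈ sphere (0 : E n) ε,
      |(∫ z, u (x + z) ∂diskMeasure n ε v₁) - ∫ z, u (x + z) ∂diskMeasure n ε v₂|
        ≤ 2 * L * ‖v₁ - v₂‖ := fun v₁ hv₁ v₂ hv₂ =>
    abs_integral_diskMeasure_sub_le hu x (mem_sphere_zero_iff_norm.mp hv₁)
      (mem_sphere_zero_iff_norm.mp hv₂)
  refine ⟨LipschitzOnWith.continuousOn (K := 2 * L) ?_, hlip⟩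
  exact .of_dist_le_mul fun v₁ hv₁ v₂ hv₂ => by
    simpa [Real.dist_eq, dist_eq_norm] using hlip v₁ hv₁ v₂ hv₂

theorem stmt_8 (n : ℕ) (hn : 2 ≤ n) :
    ∃ C : ℝ, ∀ ε : ℝ, 0 < ε → ∀ (u : E n → ℝ) (L : ℝ≥0), LipschitzWith L u →
      ∀ x : E n,
        ContinuousOn (fun v => ∫ z, u (x + z) ∂(diskMeasure n ε v))
          (sphere (0 : E n) ε) ∧
        ∀ v₁ ∈ sphere (0 : E n) ε, ∀ v₂ ∈ sphere (0 : E n) ε,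
          |(∫ z, u (x + z) ∂(diskMeasure n ε v₁)) -
              ∫ z, u (x + z) ∂(diskMeasure n ε v₂)| ≤
            C * L * ‖v₁ - v₂‖ :=
  stmt_8_general n
end
end
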